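/- arXiv:2505.24168 — 2 statements merged into one kernel-verified Lean document; each statement's English description precedes it below -/
import Mathlib

section
/- Let χ₀ > 0 and Γ > 0, and define g(A) = exp(-χ₀·A/(A+Γ²)) · A/(A+Γ²)⁴ for A > 0. Then g attains its maximum over (0,∞) at A* = Γ²·(χ₀+4-√(χ₀²+4χ₀+16))/(χ₀-4+√(χ₀²+4χ₀+16)). -/
theorem stmt_0 (χ₀ Γ : ℝ) (hχ : 0 < χ₀) (hΓ : 0 < Γ)
    (g : ℝ → ℝ)
    (hg : ∀ A : ℝ, g A = Real.exp (-(χ₀ * A / (A + Γ ^ 2))) * A / (A + Γ ^ 2) ^ 4)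
    (Astar : ℝ)
    (hA : Astar = Γ ^ 2 * (χ₀ + 4 - Real.sqrt (χ₀ ^ 2 + 4 * χ₀ + 16)) /
      (χ₀ - 4 + Real.sqrt (χ₀ ^ 2 + 4 * χ₀ + 16))) :
    Astar ∈ Set.Ioi (0 : ℝ) ∧ IsMaxOn g (Set.Ioi (0 : ℝ)) Astar := by
  set s := Real.sqrt (χ₀ ^ 2 + 4 * χ₀ + 16) with hs_def
  have hs2 : s ^ 2 = χ₀ ^ 2 + 4 * χ₀ + 16 := Real.sq_sqrt (by positivity)
  have hs0 : 0 ≤ s := Real.sqrt_nonneg _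
  have hs4 : 4 < s := by nlinarith
  have hsχ : s < χ₀ + 4 := by nlinarith
  have hsχ4 : χ₀ - 4 < s := by nlinarith
  have hΓ2 : (0:ℝ) < Γ ^ 2 := by positivity
  -- t1 is the critical point in (0,1)
  set t1 : ℝ := (χ₀ + 4 - s) / (2 * χ₀) with ht1_def
  have ht1pos : 0 < t1 := by
    apply div_pos <;> nlinarith
  have ht1lt : t1 < 1 := by
    rw [div_lt_one (by nlinarith)]
    nlinarith
  -- the auxiliary function h
  set h : ℝ → ℝ := fun t => Real.exp (-(χ₀ * t)) * (t * (1 - t) ^ 3) with hh_def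
  -- derivative of h
  have hderiv : ∀ t : ℝ, HasDerivAt h
      (Real.exp (-(χ₀ * t)) * ((1 - t) ^ 2 * (χ₀ * t ^ 2 - (χ₀ + 4) * t + 1))) t := by
    intro t
    have h1 : HasDerivAt (fun t : ℝ => Real.exp (-(χ₀ * t))) (Real.exp (-(χ₀ * t)) * (-χ₀)) t := by
      have : HasDerivAt (fun t : ℝ => -(χ₀ * t)) (-χ₀) t := by
        simpa using ((hasDerivAt_id t).const_mul χ₀).fun_neg
      exact this.exp
    have h2 : HasDerivAt (fun t : ℝ => t * (1 - t) ^ 3)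
        ((1 : ℝ) * (1 - t) ^ 3 + t * (3 * (1 - t) ^ 2 * (-1))) t := by
      have ha : HasDerivAt (fun t : ℝ => (1 - t) ^ 3) (3 * (1 - t) ^ 2 * (-1)) t := by
        have : HasDerivAt (fun t : ℝ => 1 - t) (-1) t := by
          simpa using (hasDerivAt_id t).const_sub 1
        simpa using this.fun_pow 3
      simpa using (hasDerivAt_id t).fun_mul ha
    have : HasDerivAt h _ t := h1.fun_mul h2
    convert this using 1
    ring
  have hdiff : ∀ t : ℝ, DifferentiableAt ℝ h t := fun t => (hderiv t).differentiableAt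
  have hderiv' : ∀ t : ℝ, deriv h t =
      Real.exp (-(χ₀ * t)) * ((1 - t) ^ 2 * (χ₀ * t ^ 2 - (χ₀ + 4) * t + 1)) :=
    fun t => (hderiv t).deriv
  -- monotone on [0, t1]
  have hmono : MonotoneOn h (Set.Icc 0 t1) := by
    apply monotoneOn_of_deriv_nonneg (convex_Icc 0 t1)
      (fun t _ => (hdiff t).continuousAt.continuousWithinAt)
      (fun t _ => (hdiff t).differentiableWithinAt)
    intro t ht
    rw [interior_Icc] at ht
    rw [hderiv']
    have h1 : 0 < t := ht.1
    have h2 : t < t1 := ht.2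
    have hq : 0 ≤ χ₀ * t ^ 2 - (χ₀ + 4) * t + 1 := by
      have hlt : t * (2 * χ₀) < χ₀ + 4 - s :=
        (lt_div_iff₀ (by positivity : (0:ℝ) < 2 * χ₀)).mp (ht1_def ▸ h2)
      nlinarith [sq_nonneg (2 * χ₀ * t - (χ₀ + 4)), sq_nonneg (2 * χ₀ * t - (χ₀ + 4) + s)]
    positivity
  -- antitone on [t1, 1]
  have hanti : AntitoneOn h (Set.Icc t1 1) := by
    apply antitoneOn_of_deriv_nonpos (convex_Icc t1 1)
      (fun t _ => (hdiff t).continuousAt.continuousWithinAt)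
      (fun t _ => (hdiff t).differentiableWithinAt)
    intro t ht
    rw [interior_Icc] at ht
    rw [hderiv']
    have h1 : t1 < t := ht.1
    have h2 : t < 1 := ht.2
    have hq : χ₀ * t ^ 2 - (χ₀ + 4) * t + 1 ≤ 0 := by
      have hl : χ₀ + 4 - s < t * (2 * χ₀) :=
        (div_lt_iff₀ (by positivity : (0:ℝ) < 2 * χ₀)).mp (ht1_def ▸ h1)
      -- upper root: 2χ₀ t < χ₀ + 4 + s since t < 1 and χ₀ - 4 < s
      have hu : 2 * χ₀ * t < χ₀ + 4 + s := by nlinarith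
      nlinarith [mul_pos (by linarith : (0:ℝ) < 2 * χ₀ * t - (χ₀ + 4 - s))
        (by linarith : (0:ℝ) < χ₀ + 4 + s - 2 * χ₀ * t)]
    have he : (0:ℝ) ≤ Real.exp (-(χ₀ * t)) := (Real.exp_pos _).le
    nlinarith [sq_nonneg (1 - t), mul_nonneg he (sq_nonneg (1 - t))]
  -- h t ≤ h t1 on [0,1]
  have hmax : ∀ t ∈ Set.Icc (0:ℝ) 1, h t ≤ h t1 := by
    intro t ht
    rcases le_total t t1 with hle | hle
    · exact hmono ⟨ht.1, hle⟩ ⟨le_of_lt ht1pos, le_refl t1⟩ hle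
    · exact hanti ⟨le_refl t1, le_of_lt ht1lt⟩ ⟨hle, ht.2⟩ hle
  -- positivity of Astar
  have hden : 0 < χ₀ - 4 + s := by nlinarith
  have hnum : 0 < χ₀ + 4 - s := by nlinarith
  have hApos : 0 < Astar := by
    rw [hA]; positivity
  refine ⟨hApos, ?_⟩
  -- relating g and h
  have hgA : ∀ A : ℝ, 0 < A → g A = h (A / (A + Γ ^ 2)) / Γ ^ 6 := by
    intro A hApos'
    have hAden : 0 < A + Γ ^ 2 := by positivity
    rw [hg, hh_def]
    simp only
    rw [show χ₀ * (A / (A + Γ ^ 2)) = χ₀ * A / (A + Γ ^ 2) from (mul_div_assoc _ _ _).symm]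
    field_simp
    ring
  -- Astar maps to t1
  have hAt1 : Astar / (Astar + Γ ^ 2) = t1 := by
    rw [hA, ht1_def]
    have hd : (χ₀ - 4 + s) ≠ 0 := ne_of_gt hden
    have h2χ : (2 * χ₀) ≠ 0 := by positivity
    have hdd : Γ ^ 2 * (χ₀ + 4 - s) / (χ₀ - 4 + s) + Γ ^ 2 = Γ ^ 2 * (2 * χ₀) / (χ₀ - 4 + s) := by
      field_simp
      ring
    rw [hdd, div_div_div_cancel_right₀, mul_comm (Γ^2) (χ₀+4-s), mul_comm (Γ^2) (2*χ₀),
      mul_div_mul_right _ _ (ne_of_gt hΓ2)]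
    exact hd
  intro A hAmem
  have hApos' : 0 < A := hAmem
  have hAden : 0 < A + Γ ^ 2 := by positivity
  have htmem : A / (A + Γ ^ 2) ∈ Set.Icc (0:ℝ) 1 := by
    constructor
    · positivity
    · rw [div_le_one hAden]; linarith
  have key : h (A / (A + Γ ^ 2)) ≤ h t1 := hmax _ htmem
  simp only [Set.mem_setOf_eq]
  rw [hgA A hApos', hgA Astar hApos, hAt1]
  exact div_le_div_of_nonneg_right key (by positivity) |>.trans_eq rfl
end

section
/- Let N ≥ 1, γₙ, βₙ, εₙ > 0 for all n, and consider maximizing C(α) = Σₙ γₙ log₂(1 + βₙαₙ/(αₙ+εₙ)) over α ≥ 0 with Σₙαₙ = 1. Then α* defined by αₙ* = max(0, (-(2+βₙ)εₙ + √(βₙ²εₙ² + 4ν γₙβₙ(1+βₙ)εₙ))/(2(1+βₙ))), where ν > 0 is chosen so that Σₙαₙ* = 1, is a global maximizer of this problem. -/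
/-!
Each band's rate `a ↦ log (1 + β a / (a + ε))` is concave, and `α*` satisfies the KKT
conditions of the problem with multiplier `1 / (ν log 2)`: the rate's slope at `αₙ*` equals
that multiplier when `αₙ* > 0` and is at most it when `αₙ* = 0`. The resulting supergradient
inequalities, summed over the bands, cancel against the constraint `∑ α = ∑ α* = 1`.
-/

open Real

/-- Sufficiency of the KKT conditions for a separable objective under a sum constraint. -/
lemma Finset.sum_le_sum_of_le_add_mul_sub {ι : Type*} (s : Finset ι) (f : ι → ℝ → ℝ)
    (x y : ι → ℝ) (c : ℝ) (h : ∀ i ∈ s, f i (y i) ≤ f i (x i) + c * (y i - x i))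
    (hsum : ∑ i ∈ s, y i = ∑ i ∈ s, x i) :
    ∑ i ∈ s, f i (y i) ≤ ∑ i ∈ s, f i (x i) :=
  calc ∑ i ∈ s, f i (y i) ≤ ∑ i ∈ s, (f i (x i) + c * (y i - x i)) := Finset.sum_le_sum h
    _ = ∑ i ∈ s, f i (x i) := by
      rw [Finset.sum_add_distrib, ← Finset.mul_sum, Finset.sum_sub_distrib, hsum]
      simp

lemma log_one_add_mul_div_sub_le {β ε x y : ℝ} (hβ : 0 ≤ β) (hε : 0 < ε) (hx : 0 ≤ x)
    (hy : 0 ≤ y) :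
    log (1 + β * y / (y + ε)) - log (1 + β * x / (x + ε)) ≤
      β * ε * (y - x) / (((1 + β) * x + ε) * (y + ε)) := by
  have hratio : 0 < (1 + β * y / (y + ε)) / (1 + β * x / (x + ε)) := by positivity
  calc log (1 + β * y / (y + ε)) - log (1 + β * x / (x + ε))
      = log ((1 + β * y / (y + ε)) / (1 + β * x / (x + ε))) :=
        (log_div (by positivity) (by positivity)).symm
    _ ≤ (1 + β * y / (y + ε)) / (1 + β * x / (x + ε)) - 1 := log_le_sub_one_of_pos hratio
    _ = β * ε * (y - x) / (((1 + β) * x + ε) * (y + ε)) := by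
      field_simp
      ring

noncomputable def optimalAttention (γ β ε ν : ℝ) : ℝ :=
  max 0 ((-(2 + β) * ε + √(β ^ 2 * ε ^ 2 + 4 * ν * γ * β * (1 + β) * ε)) / (2 * (1 + β)))

lemma optimalAttention_nonneg (γ β ε ν : ℝ) : 0 ≤ optimalAttention γ β ε ν :=
  le_max_left _ _

/-- KKT conditions: the positive root of `((1 + β) a + ε) (a + ε) = ν γ β ε` is the
stationary point of the Lagrangian, and it is clipped at `0` when that root is negative. -/
lemma optimalAttention_kkt {γ β ε ν : ℝ} (hγ : 0 ≤ γ) (hβ : 0 ≤ β) (hε : 0 < ε)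
    (hν : 0 ≤ ν) :
    ν * γ * β * ε ≤ ((1 + β) * optimalAttention γ β ε ν + ε) * (optimalAttention γ β ε ν + ε) ∧
      (0 < optimalAttention γ β ε ν →
        ((1 + β) * optimalAttention γ β ε ν + ε) * (optimalAttention γ β ε ν + ε) =
          ν * γ * β * ε) := by
  set D := β ^ 2 * ε ^ 2 + 4 * ν * γ * β * (1 + β) * ε
  have hβ1 : 0 < 1 + β := by linarith
  obtain ⟨r, hr⟩ : ∃ r, r = (-(2 + β) * ε + √D) / (2 * (1 + β)) := ⟨_, rfl⟩
  have hx : optimalAttention γ β ε ν = max 0 r := by rw [hr]; rfl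
  have hs : √D = 2 * (1 + β) * r + (2 + β) * ε := by
    rw [hr]
    field_simp
    ring
  have hroot : ((1 + β) * r + ε) * (r + ε) = ν * γ * β * ε := by
    have hsq : D = (2 * (1 + β) * r + (2 + β) * ε) ^ 2 := by
      rw [← hs, sq_sqrt (by positivity)]
    refine mul_left_cancel₀ (by positivity : (4 * (1 + β) : ℝ) ≠ 0) ?_
    linear_combination -hsq
  rw [hx]
  rcases le_or_gt r 0 with hr0 | hr0
  · rw [max_eq_left hr0]
    refine ⟨?_, fun h => absurd h (lt_irrefl 0)⟩
    -- `r` lies right of the vertex of the parabola, where it increases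
    have hvertex : 0 ≤ (1 + β) * r + (2 + β) * ε := by nlinarith [sqrt_nonneg D]
    nlinarith [mul_nonneg (neg_nonneg.2 hr0) hvertex]
  · rw [max_eq_right hr0.le]
    exact ⟨hroot.ge, fun _ => hroot⟩

lemma mul_sub_le_of_optimalAttention {γ β ε ν y : ℝ} (hγ : 0 ≤ γ) (hβ : 0 ≤ β) (hε : 0 < ε)
    (hν : 0 ≤ ν) (hy : 0 ≤ y) :
    ν * γ * β * ε * (y - optimalAttention γ β ε ν) ≤
      ((1 + β) * optimalAttention γ β ε ν + ε) * (y + ε) * (y - optimalAttention γ β ε ν) := by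
  obtain ⟨hle, heq⟩ := optimalAttention_kkt hγ hβ hε hν
  have hx := optimalAttention_nonneg γ β ε ν
  set x := optimalAttention γ β ε ν
  rcases hx.eq_or_lt with hx0 | hx0
  · rw [← hx0] at hle ⊢
    nlinarith [mul_nonneg hε.le hy]
  · have hAx : 0 ≤ (1 + β) * x + ε := by positivity
    nlinarith [heq hx0, mul_nonneg hAx (sq_nonneg (y - x))]

lemma mul_log_le_of_optimalAttention {γ β ε ν y : ℝ} (hγ : 0 ≤ γ) (hβ : 0 ≤ β) (hε : 0 < ε)
    (hν : 0 < ν) (hy : 0 ≤ y) :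
    γ * log (1 + β * y / (y + ε)) ≤
      γ * log (1 + β * optimalAttention γ β ε ν / (optimalAttention γ β ε ν + ε)) +
        ν⁻¹ * (y - optimalAttention γ β ε ν) := by
  have hkkt := mul_sub_le_of_optimalAttention hγ hβ hε hν.le hy
  have hx := optimalAttention_nonneg γ β ε ν
  set x := optimalAttention γ β ε ν
  have hden : 0 < ((1 + β) * x + ε) * (y + ε) := by positivity
  have hslope : γ * (β * ε * (y - x) / (((1 + β) * x + ε) * (y + ε))) ≤ ν⁻¹ * (y - x) := by
    rw [mul_div_assoc', inv_mul_eq_div, div_le_div_iff₀ hden hν]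
    linarith
  nlinarith [mul_le_mul_of_nonneg_left (log_one_add_mul_div_sub_le hβ hε hx hy) hγ]

theorem stmt_19_general (N : ℕ) (γ β ε : Fin N → ℝ)
    (hγ : ∀ n, 0 < γ n) (hβ : ∀ n, 0 < β n) (hε : ∀ n, 0 < ε n)
    (ν : ℝ) (hν : 0 < ν)
    (αstar : Fin N → ℝ)
    (hαs : ∀ n, αstar n = max 0
      ((-(2 + β n) * ε n +
          Real.sqrt (β n ^ 2 * ε n ^ 2 + 4 * ν * γ n * β n * (1 + β n) * ε n)) /
        (2 * (1 + β n))))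
    (hsum : ∑ n, αstar n = 1) :
    ∀ α : Fin N → ℝ, (∀ n, 0 ≤ α n) → ∑ n, α n = 1 →
      ∑ n, γ n * Real.logb 2 (1 + β n * α n / (α n + ε n)) ≤
        ∑ n, γ n * Real.logb 2 (1 + β n * αstar n / (αstar n + ε n)) := by
  intro α hα hαsum
  simp only [logb, mul_div_assoc', ← Finset.sum_div]
  refine div_le_div_of_nonneg_right ?_ (log_pos one_lt_two).le
  refine Finset.sum_le_sum_of_le_add_mul_sub Finset.univ
    (fun n a => γ n * log (1 + β n * a / (a + ε n))) αstar α ν⁻¹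
    (fun n _ => ?_) (hαsum.trans hsum.symm)
  rw [show αstar n = optimalAttention (γ n) (β n) (ε n) ν from hαs n]
  exact mul_log_le_of_optimalAttention (hγ n).le (hβ n).le (hε n) hν (hα n)

theorem stmt_19 (N : ℕ) (hN : 1 ≤ N) (γ β ε : Fin N → ℝ)
    (hγ : ∀ n, 0 < γ n) (hβ : ∀ n, 0 < β n) (hε : ∀ n, 0 < ε n)
    (ν : ℝ) (hν : 0 < ν)
    (αstar : Fin N → ℝ)
    (hαs : ∀ n, αstar n = max 0
      ((-(2 + β n) * ε n +
          Real.sqrt (β n ^ 2 * ε n ^ 2 + 4 * ν * γ n * β n * (1 + β n) * ε n)) /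
        (2 * (1 + β n))))
    (hsum : ∑ n, αstar n = 1) :
    ∀ α : Fin N → ℝ, (∀ n, 0 ≤ α n) → ∑ n, α n = 1 →
      ∑ n, γ n * Real.logb 2 (1 + β n * α n / (α n + ε n)) ≤
        ∑ n, γ n * Real.logb 2 (1 + β n * αstar n / (αstar n + ε n)) :=
  stmt_19_general N γ β ε hγ hβ hε ν hν αstar hαs hsum
end
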